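/- For every d ≥ 2 and r ∈ ℕ there is a constant C(d) > 0 (depending only on d) such that for all v ∈ ℕ_0 and u ∈ ℝ_+^d: (I) if 2^v pr(u,d) ≥ 1 then σ^r(v,u) ≤ C(d) (log(2^{v+1} pr(u,d)))^{d-1} / (2^v pr(u,d))^{r/2}; and (II) if 2^v pr(u,d) ≤ 1 then σ^r(v,u) ≤ C(d) (2^v pr(u,d))^{r/2} (log(2/(2^v pr(u,d))))^{d-1}; here log denotes the logarithm to base 2. -/

import Mathlib

/-!
Write `u_j = 2 ^ a_j` and `w_j = s_j + a_j`. The summand is `2 ^ (-(r/2) Σ |w_j|)`, while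
`Σ w_j = L := log₂ (2^v pr(u,d))` does not depend on `s`. As `Σ |w_j| ≥ |L|` and `r/2 ≥ 1/2`, the
sum is at most `2 ^ (-(r/2)|L|) Σ_s 2 ^ (-(Σ |w_j| - |L|)/2)`. The tuples whose excess
`Σ |w_j| - |L|` lies in `[2n, 2n+2)` have every `|w_j| ≤ |L| + 2n + 2` and are determined by all but
one coordinate, so there are `O(((1 + |L|)(n + 1)) ^ (d-1))` of them; against the weight `2 ^ (-n)`
this sums to `O((1 + |L|) ^ (d-1))`, and `1 + |L|` is the logarithm in (I) resp. (II).
-/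

open Finset Real

lemma card_Icc_ceil_floor_le {x y : ℝ} (h : x ≤ y) : (#(Icc ⌈x⌉ ⌊y⌋) : ℝ) ≤ y - x + 1 := by
  rw [Int.card_Icc]
  have hy := Int.floor_le y
  have hx := Int.le_ceil x
  rcases le_total 0 (⌊y⌋ + 1 - ⌈x⌉) with hn | hn
  · have hcast : ((⌊y⌋ + 1 - ⌈x⌉).toNat : ℝ) = ((⌊y⌋ + 1 - ⌈x⌉ : ℤ) : ℝ) := by
      exact_mod_cast Int.toNat_of_nonneg hn
    rw [hcast]
    push_cast
    linarith
  · rw [Int.toNat_eq_zero.mpr hn, Nat.cast_zero]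
    linarith

lemma Finset.Nat.eq_of_mem_antidiagonalTuple_of_tail_eq {k n : ℕ} {s t : Fin (k + 1) → ℕ}
    (hs : s ∈ Nat.antidiagonalTuple (k + 1) n) (ht : t ∈ Nat.antidiagonalTuple (k + 1) n)
    (h : Fin.tail s = Fin.tail t) : s = t := by
  rw [Nat.mem_antidiagonalTuple, Fin.sum_univ_succ] at hs ht
  have htail : ∑ i, Fin.tail s i = ∑ i, Fin.tail t i := by rw [h]
  simp only [Fin.tail] at htail
  ext i
  cases i using Fin.cases with
  | zero => omega
  | succ i => exact congrFun h i

lemma card_filter_antidiagonalTuple_abs_le (e v : ℕ) (a : Fin (e + 1) → ℝ) {B : ℝ}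
    (hB : 0 ≤ B) :
    (#{s ∈ Nat.antidiagonalTuple (e + 1) v | ∀ j, |(s j : ℝ) + a j| ≤ B} : ℝ) ≤
      (2 * B + 1) ^ e := by
  have hinj := card_le_card_of_injOn (fun s (j : Fin e) => (s j.succ : ℤ))
    (s := {s ∈ Nat.antidiagonalTuple (e + 1) v | ∀ j, |(s j : ℝ) + a j| ≤ B})
    (t := Fintype.piFinset fun j : Fin e => Icc ⌈-a j.succ - B⌉ ⌊B - a j.succ⌋)
    (fun s hs => by
      rw [coe_filter] at hs
      simp only [mem_coe, Fintype.mem_piFinset, mem_Icc]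
      intro j
      have := abs_le.mp (hs.2 j.succ)
      exact ⟨Int.ceil_le.mpr (by push_cast; linarith), Int.le_floor.mpr (by push_cast; linarith)⟩)
    (fun s hs t ht hst => by
      rw [coe_filter] at hs ht
      refine Nat.eq_of_mem_antidiagonalTuple_of_tail_eq hs.1 ht.1 (funext fun j => ?_)
      exact Nat.cast_injective (R := ℤ) (congrFun hst j))
  calc (#{s ∈ Nat.antidiagonalTuple (e + 1) v | ∀ j, |(s j : ℝ) + a j| ≤ B} : ℝ)
      ≤ ∏ j : Fin e, (#(Icc ⌈-a j.succ - B⌉ ⌊B - a j.succ⌋) : ℝ) := by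
        rw [Fintype.card_piFinset] at hinj; exact_mod_cast hinj
    _ ≤ ∏ _j : Fin e, (2 * B + 1) :=
        prod_le_prod (fun _ _ => by positivity)
          fun j _ => (card_Icc_ceil_floor_le (by linarith)).trans_eq (by ring)
    _ = (2 * B + 1) ^ e := by simp

lemma summable_succ_pow_mul_half_pow (e : ℕ) :
    Summable fun n : ℕ => ((n : ℝ) + 1) ^ e * (1 / 2 : ℝ) ^ n := by
  have h := (summable_nat_add_iff 1).mpr
    (summable_pow_mul_geometric_of_norm_lt_one e (r := (1 / 2 : ℝ)) (by norm_num))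
  refine (h.mul_left 2).congr fun n => ?_
  push_cast
  ring

lemma abs_add_sum_le_sum_abs_of_mem_antidiagonalTuple {k v : ℕ} (a : Fin k → ℝ)
    {s : Fin k → ℕ} (hs : s ∈ Nat.antidiagonalTuple k v) :
    |(v : ℝ) + ∑ j, a j| ≤ ∑ j, |(s j : ℝ) + a j| := by
  have hv : (v : ℝ) = ∑ j, (s j : ℝ) := by exact_mod_cast (Nat.mem_antidiagonalTuple.mp hs).symm
  rw [hv, ← sum_add_distrib]
  exact abs_sum_le_sum_abs _ _

lemma sum_two_rpow_neg_half_excess_level_le (e v n : ℕ) (a : Fin (e + 1) → ℝ) :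
    ∑ s ∈ Nat.antidiagonalTuple (e + 1) v with
        ⌊(∑ j, |(s j : ℝ) + a j| - |(v : ℝ) + ∑ j, a j|) / 2⌋₊ = n,
      (2 : ℝ) ^ (-((∑ j, |(s j : ℝ) + a j| - |(v : ℝ) + ∑ j, a j|) / 2)) ≤
      5 ^ e * (1 + |(v : ℝ) + ∑ j, a j|) ^ e * (((n : ℝ) + 1) ^ e * (1 / 2) ^ n) := by
  set L := |(v : ℝ) + ∑ j, a j|
  set A := Nat.antidiagonalTuple (e + 1) v
  set T : (Fin (e + 1) → ℕ) → ℝ := fun s => ∑ j, |(s j : ℝ) + a j|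
  have hL : 0 ≤ L := abs_nonneg _
  have hterm : ∀ s ∈ A.filter (fun s => ⌊(T s - L) / 2⌋₊ = n),
      (2 : ℝ) ^ (-((T s - L) / 2)) ≤ (1 / 2) ^ n := by
    intro s hs
    obtain ⟨hsA, rfl⟩ := mem_filter.mp hs
    have hexcess : 0 ≤ (T s - L) / 2 := by
      linarith [abs_add_sum_le_sum_abs_of_mem_antidiagonalTuple a hsA]
    rw [one_div, inv_pow, ← rpow_natCast, ← rpow_neg zero_le_two]
    exact rpow_le_rpow_of_exponent_le one_le_two (neg_le_neg (Nat.floor_le hexcess))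
  have hsub : A.filter (fun s => ⌊(T s - L) / 2⌋₊ = n) ⊆
      A.filter (fun s => ∀ j, |(s j : ℝ) + a j| ≤ L + 2 * n + 2) := by
    refine monotone_filter_right _ fun s _ hs j => ?_
    have hT : T s < L + 2 * n + 2 := by
      have := Nat.lt_floor_add_one ((T s - L) / 2)
      rw [hs] at this
      linarith
    exact (single_le_sum (f := fun j => |(s j : ℝ) + a j|) (fun _ _ => abs_nonneg _)
      (mem_univ j)).trans hT.le
  have hcard : (#(A.filter (fun s => ⌊(T s - L) / 2⌋₊ = n)) : ℝ) ≤
      5 ^ e * (1 + L) ^ e * ((n : ℝ) + 1) ^ e := by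
    calc (#(A.filter (fun s => ⌊(T s - L) / 2⌋₊ = n)) : ℝ)
        ≤ (2 * (L + 2 * n + 2) + 1) ^ e :=
          (Nat.cast_le.mpr (card_le_card hsub)).trans
            (card_filter_antidiagonalTuple_abs_le e v a (by positivity))
      _ ≤ (5 * (1 + L) * ((n : ℝ) + 1)) ^ e := by
          gcongr
          nlinarith [(n.cast_nonneg : (0 : ℝ) ≤ n)]
      _ = 5 ^ e * (1 + L) ^ e * ((n : ℝ) + 1) ^ e := by rw [mul_pow, mul_pow]
  calc _ ≤ #(A.filter (fun s => ⌊(T s - L) / 2⌋₊ = n)) • ((1 : ℝ) / 2) ^ n :=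
        sum_le_card_nsmul _ _ _ hterm
    _ ≤ 5 ^ e * (1 + L) ^ e * ((n : ℝ) + 1) ^ e * (1 / 2) ^ n := by
        rw [nsmul_eq_mul]
        gcongr
    _ = _ := by ring

lemma exists_sum_two_rpow_neg_half_excess_le (e : ℕ) :
    ∃ C : ℝ, 0 < C ∧ ∀ (v : ℕ) (a : Fin (e + 1) → ℝ),
      ∑ s ∈ Nat.antidiagonalTuple (e + 1) v,
          (2 : ℝ) ^ (-((∑ j, |(s j : ℝ) + a j| - |(v : ℝ) + ∑ j, a j|) / 2)) ≤
        C * (1 + |(v : ℝ) + ∑ j, a j|) ^ e := by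
  set f : ℕ → ℝ := fun n => ((n : ℝ) + 1) ^ e * (1 / 2) ^ n
  have hf0 : ∀ n, 0 ≤ f n := fun n => by positivity
  have hf : Summable f := summable_succ_pow_mul_half_pow e
  refine ⟨5 ^ e * ∑' n, f n, by have := hf.tsum_pos hf0 0 (by simp [f]); positivity,
    fun v a => ?_⟩
  set L := |(v : ℝ) + ∑ j, a j|
  set A := Nat.antidiagonalTuple (e + 1) v
  set level : (Fin (e + 1) → ℕ) → ℕ := fun s => ⌊(∑ j, |(s j : ℝ) + a j| - L) / 2⌋₊
  rw [← sum_fiberwise_of_maps_to (fun s hs => mem_image_of_mem level hs)]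
  calc _ ≤ ∑ n ∈ A.image level, 5 ^ e * (1 + L) ^ e * f n :=
        sum_le_sum fun n _ => sum_two_rpow_neg_half_excess_level_le e v n a
    _ = 5 ^ e * (1 + L) ^ e * ∑ n ∈ A.image level, f n := by rw [mul_sum]
    _ ≤ 5 ^ e * (1 + L) ^ e * ∑' n, f n := by
        gcongr
        exact hf.sum_le_tsum _ fun n _ => hf0 n
    _ = _ := by ring

lemma exists_sum_two_rpow_neg_mul_sum_abs_le (e : ℕ) :
    ∃ C : ℝ, 0 < C ∧ ∀ c : ℝ, 1 / 2 ≤ c → ∀ (v : ℕ) (a : Fin (e + 1) → ℝ),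
      ∑ s ∈ Nat.antidiagonalTuple (e + 1) v, (2 : ℝ) ^ (-(c * ∑ j, |(s j : ℝ) + a j|)) ≤
        C * (1 + |(v : ℝ) + ∑ j, a j|) ^ e * 2 ^ (-(c * |(v : ℝ) + ∑ j, a j|)) := by
  obtain ⟨C, hC, hsum⟩ := exists_sum_two_rpow_neg_half_excess_le e
  refine ⟨C, hC, fun c hc v a => ?_⟩
  set L := |(v : ℝ) + ∑ j, a j|
  calc _ ≤ ∑ s ∈ Nat.antidiagonalTuple (e + 1) v,
        2 ^ (-(c * L)) * (2 : ℝ) ^ (-((∑ j, |(s j : ℝ) + a j| - L) / 2)) := by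
        refine sum_le_sum fun s hs => ?_
        rw [← rpow_add two_pos]
        apply rpow_le_rpow_of_exponent_le one_le_two
        nlinarith [abs_add_sum_le_sum_abs_of_mem_antidiagonalTuple a hs]
    _ = 2 ^ (-(c * L)) * ∑ s ∈ Nat.antidiagonalTuple (e + 1) v,
        (2 : ℝ) ^ (-((∑ j, |(s j : ℝ) + a j| - L) / 2)) := by rw [mul_sum]
    _ ≤ 2 ^ (-(c * L)) * (C * (1 + L) ^ e) := by gcongr; exact hsum v a
    _ = _ := by ring

lemma min_rpow_inv_eq_two_rpow_neg_mul_abs {c : ℝ} (hc : 0 ≤ c) (w : ℝ) :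
    min (((2 : ℝ) ^ w) ^ c) (((2 : ℝ) ^ w) ^ c)⁻¹ = 2 ^ (-(c * |w|)) := by
  have hmono : Monotone fun y : ℝ => (2 : ℝ) ^ y :=
    fun _ _ h => rpow_le_rpow_of_exponent_le one_le_two h
  rw [← rpow_mul zero_le_two, ← rpow_neg zero_le_two, ← hmono.map_min]
  congr 1
  rcases le_total 0 w with hw | hw
  · rw [abs_of_nonneg hw, min_eq_right (by nlinarith)]; ring
  · rw [abs_of_nonpos hw, min_eq_left (by nlinarith)]; ring

lemma two_pow_mul_eq_two_rpow_add_logb (n : ℕ) {x : ℝ} (hx : 0 < x) :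
    (2 : ℝ) ^ n * x = 2 ^ ((n : ℝ) + logb 2 x) := by
  rw [rpow_add two_pos, rpow_natCast, rpow_logb two_pos one_lt_two.ne' hx]

lemma prod_min_rpow_inv_eq_two_rpow_neg {ι : Type*} [Fintype ι] {c : ℝ} (hc : 0 ≤ c)
    (s : ι → ℕ) {u : ι → ℝ} (hu : ∀ j, 0 < u j) :
    ∏ j, min (((2 : ℝ) ^ s j * u j) ^ c) (((2 : ℝ) ^ s j * u j) ^ c)⁻¹ =
      2 ^ (-(c * ∑ j, |(s j : ℝ) + logb 2 (u j)|)) := by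
  simp_rw [two_pow_mul_eq_two_rpow_add_logb _ (hu _), min_rpow_inv_eq_two_rpow_neg_mul_abs hc,
    ← rpow_sum_of_pos two_pos, mul_sum, sum_neg_distrib]

theorem sigma_r_bound (d : ℕ) (hd : 2 ≤ d) :
    ∃ C : ℝ, 0 < C ∧ ∀ r : ℕ, 1 ≤ r → ∀ v : ℕ, ∀ u : Fin d → ℝ, (∀ j, 0 < u j) →
      (1 ≤ (2 : ℝ) ^ v * ∏ j, u j →
        ∑ s ∈ Finset.Nat.antidiagonalTuple d v,
            ∏ j, min (((2 : ℝ) ^ s j * u j) ^ ((r : ℝ) / 2))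
              ((((2 : ℝ) ^ s j * u j) ^ ((r : ℝ) / 2))⁻¹) ≤
          C * Real.logb 2 ((2 : ℝ) ^ (v + 1) * ∏ j, u j) ^ (d - 1) /
            ((2 : ℝ) ^ v * ∏ j, u j) ^ ((r : ℝ) / 2)) ∧
      ((2 : ℝ) ^ v * ∏ j, u j ≤ 1 →
        ∑ s ∈ Finset.Nat.antidiagonalTuple d v,
            ∏ j, min (((2 : ℝ) ^ s j * u j) ^ ((r : ℝ) / 2))
              ((((2 : ℝ) ^ s j * u j) ^ ((r : ℝ) / 2))⁻¹) ≤
          C * ((2 : ℝ) ^ v * ∏ j, u j) ^ ((r : ℝ) / 2) *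
            Real.logb 2 (2 / ((2 : ℝ) ^ v * ∏ j, u j)) ^ (d - 1)) := by
  obtain ⟨e, rfl⟩ : ∃ e, d = e + 1 := ⟨d - 1, by omega⟩
  obtain ⟨C, hC, hsum⟩ := exists_sum_two_rpow_neg_mul_sum_abs_le e
  refine ⟨C, hC, fun r hr v u hu => ?_⟩
  have hc : (1 : ℝ) / 2 ≤ r / 2 := by gcongr; exact_mod_cast hr
  have hbound := hsum (r / 2) hc v fun j => logb 2 (u j)
  simp_rw [← prod_min_rpow_inv_eq_two_rpow_neg (hc.trans' one_half_pos.le) _ hu] at hbound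
  set L := (v : ℝ) + ∑ j, logb 2 (u j)
  have hX : (2 : ℝ) ^ v * ∏ j, u j = 2 ^ L := by
    rw [two_pow_mul_eq_two_rpow_add_logb v (prod_pos fun j _ => hu j),
      logb_prod _ _ fun j _ => (hu j).ne']
  rw [pow_succ, mul_right_comm, hX, ← rpow_mul zero_le_two, Nat.add_sub_cancel,
    logb_mul (by positivity) two_ne_zero, logb_div two_ne_zero (by positivity),
    logb_rpow two_pos one_lt_two.ne', logb_self_eq_one one_lt_two]
  constructor
  · intro hX1
    have hL : 0 ≤ L := (rpow_le_rpow_left_iff one_lt_two).mp (by rwa [rpow_zero])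
    refine hbound.trans_eq ?_
    rw [abs_of_nonneg hL, rpow_neg zero_le_two, mul_comm _ L, add_comm 1 L]
    exact (div_eq_mul_inv _ _).symm
  · intro hX1
    have hL : L ≤ 0 := (rpow_le_rpow_left_iff one_lt_two).mp (by rwa [rpow_zero])
    refine hbound.trans_eq ?_
    rw [abs_of_nonpos hL, mul_neg, neg_neg, mul_comm _ L, ← sub_eq_add_neg]
    ring
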